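/- (Algebraic core of: the type IB♯ MCK Lefschetz pencil of odd genus has spin total space.) Let g be odd, g ≥ 3. In V, define the vectors: B_{0,1} = α_1+⋯+α_g+δ_2+δ_4+δ_5+δ_8; B_{1,1} = α_1+⋯+α_g+β_1+β_g+δ_4+δ_5+δ_8; B_{2i,1} = α_{i+1}+⋯+α_{g−i}+β_i+β_{g+1−i}+δ_4+δ_5+δ_8 for 1 ≤ i ≤ (g−1)/2; B_{2i+1,1} = α_{i+1}+⋯+α_{g−i}+β_{i+1}+β_{g−i}+δ_4+δ_5+δ_8 for 1 ≤ i ≤ (g−3)/2; B_{g,1} = α_{(g+1)/2}+δ_5+δ_6; a_1 = β_{(g+1)/2}+δ_5; a_2 = β_{(g+1)/2}+δ_7; b_1 = β_{(g+1)/2}+δ_6; b_2 = β_{(g+1)/2}+δ_8; B_{k,2} = B_{k,1}+δ_3+δ_4 for 0 ≤ k ≤ g; a_3 = β_{(g+1)/2}+δ_3; a_4 = β_{(g+1)/2}+δ_3+δ_5+δ_7; b_3 = β_{(g+1)/2}+δ_4; b_4 = β_{(g+1)/2}+δ_4+δ_6+δ_8. Then there exists a quadratic form q with respect to B such that q takes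 the value 1 on each of the vectors B_{k,j} (0 ≤ k ≤ g, j ∈ {1,2}), a_1, a_2, a_3, a_4, b_1, b_2, b_3, b_4, and q(δ_j) = 1 for all j ∈ {1, …, 8}. -/
import Mathlib


/-- The mod-2 first homology of the compact genus-`g` surface with 8 boundary
components: freely spanned by `α_1, …, α_g, β_1, …, β_g, δ_1, …, δ_7`. -/
abbrev MCKVec (g : ℕ) := (Fin g ⊕ Fin g ⊕ Fin 7) → ZMod 2

/-- The basis vector `α_i` (for `1 ≤ i ≤ g`). -/
def alph (g i : ℕ) : MCKVec g := fun x =>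
  match x with
  | Sum.inl j => if (j : ℕ) + 1 = i then 1 else 0
  | _ => 0

/-- The basis vector `β_i` (for `1 ≤ i ≤ g`). -/
def bet (g i : ℕ) : MCKVec g := fun x =>
  match x with
  | Sum.inr (Sum.inl j) => if (j : ℕ) + 1 = i then 1 else 0
  | _ => 0

/-- The basis vector `δ_j` (for `1 ≤ j ≤ 7`). -/
def dlt' (g j : ℕ) : MCKVec g := fun x =>
  match x with
  | Sum.inr (Sum.inr k) => if (k : ℕ) + 1 = j then 1 else 0
  | _ => 0

/-- The boundary classes `δ_1, …, δ_7`, with `δ_8 := δ_1 + δ_2 + ⋯ + δ_7`. -/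
def dlt (g j : ℕ) : MCKVec g :=
  if j = 8 then
    dlt' g 1 + dlt' g 2 + dlt' g 3 + dlt' g 4 + dlt' g 5 + dlt' g 6 + dlt' g 7
  else dlt' g j

/-- The mod-2 intersection pairing: the symmetric bilinear form determined by
`B(α_i, β_i) = 1` for each `i` and `B = 0` on every other pair of basis vectors. -/
def Bform (g : ℕ) (x y : MCKVec g) : ZMod 2 :=
  ∑ j : Fin g,
    (x (Sum.inl j) * y (Sum.inr (Sum.inl j)) + x (Sum.inr (Sum.inl j)) * y (Sum.inl j))

/-- The homology classes of the vanishing cycles  (first half of the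
monodromy factorization), as computed in the paper. -/
def BIBsharp (g k : ℕ) : MCKVec g :=
  if k = 0 then (∑ m ∈ Finset.Icc 1 g, alph g m) + dlt g 2 + dlt g 4 + dlt g 5 + dlt g 8
  else if k = 1 then (∑ m ∈ Finset.Icc 1 g, alph g m) + bet g 1 + bet g g + dlt g 4 + dlt g 5 + dlt g 8
  else if k = g then alph g ((g + 1) / 2) + dlt g 5 + dlt g 6
  else if k % 2 = 0 then
    (∑ m ∈ Finset.Icc (k / 2 + 1) (g - k / 2), alph g m)
      + bet g (k / 2) + bet g (g + 1 - k / 2) + dlt g 4 + dlt g 5 + dlt g 8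
  else
    (∑ m ∈ Finset.Icc ((k - 1) / 2 + 1) (g - (k - 1) / 2), alph g m)
      + bet g ((k - 1) / 2 + 1) + bet g (g - (k - 1) / 2) + dlt g 4 + dlt g 5 + dlt g 8

def qform (g : ℕ) (x : MCKVec g) : ZMod 2 :=
  (∑ j : Fin g, x (Sum.inl j) * x (Sum.inr (Sum.inl j)))
  + (∑ j : Fin g, x (Sum.inl j))
  + (∑ j : Fin g, (if (j : ℕ) + 1 ≤ (g - 1) / 2 then (1 : ZMod 2) else 0) * x (Sum.inr (Sum.inl j)))
  + (∑ j : Fin 7, x (Sum.inr (Sum.inr j)))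

lemma qform_add (g : ℕ) (x y : MCKVec g) :
    qform g (x + y) = qform g x + qform g y + Bform g x y := by
  simp only [qform, Bform, Pi.add_apply, mul_add, add_mul, Finset.sum_add_distrib, mul_comm]
  ring

lemma Bform_add_left (g : ℕ) (x y z : MCKVec g) :
    Bform g (x + y) z = Bform g x z + Bform g y z := by
  simp only [Bform, Pi.add_apply, mul_add, add_mul, Finset.sum_add_distrib]
  ring

@[simp] lemma sum_alph_inl (g a b : ℕ) (j : Fin g) :
    (∑ m ∈ Finset.Icc a b, alph g m) (Sum.inl j)
      = if (j : ℕ) + 1 ∈ Finset.Icc a b then 1 else 0 := by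
  rw [Finset.sum_apply]
  simp only [alph]
  exact Finset.sum_ite_eq (Finset.Icc a b) ((j:ℕ)+1) (fun _ => (1 : ZMod 2))

@[simp] lemma sum_alph_inrl (g a b : ℕ) (j : Fin g) :
    (∑ m ∈ Finset.Icc a b, alph g m) (Sum.inr (Sum.inl j)) = 0 := by
  rw [Finset.sum_apply]; simp [alph]

@[simp] lemma sum_alph_inrr (g a b : ℕ) (j : Fin 7) :
    (∑ m ∈ Finset.Icc a b, alph g m) (Sum.inr (Sum.inr j)) = 0 := by
  rw [Finset.sum_apply]; simp [alph]

lemma odd_cast (n : ℕ) (h : n % 2 = 1) : ((n : ℕ) : ZMod 2) = 1 := by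
  rw [← Nat.mod_add_div n 2, h]
  push_cast
  rw [show ((2:ZMod 2)) = 0 from rfl]
  ring

lemma count_lemma (g a b : ℕ) (ha : 1 ≤ a) (hb : b ≤ g) :
    (∑ j : Fin g, if (j : ℕ) + 1 ∈ Finset.Icc a b then (1 : ZMod 2) else 0)
      = ((b + 1 - a : ℕ) : ZMod 2) := by
  rw [Fin.sum_univ_eq_sum_range (fun j => if j + 1 ∈ Finset.Icc a b then (1 : ZMod 2) else 0) g]
  rw [Finset.sum_boole]
  have : (Finset.range g).filter (fun j => j + 1 ∈ Finset.Icc a b) = Finset.Ico (a-1) b := by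
    ext j
    simp only [Finset.mem_filter, Finset.mem_range, Finset.mem_Icc, Finset.mem_Ico]
    omega
  rw [this, Nat.card_Ico]
  congr 1
  omega

lemma q_sum_alph (g a b : ℕ) (ha : 1 ≤ a) (hb : b ≤ g) :
    qform g (∑ m ∈ Finset.Icc a b, alph g m) = ((b + 1 - a : ℕ) : ZMod 2) := by
  simp only [qform, sum_alph_inl, sum_alph_inrl, sum_alph_inrr, mul_zero,
    Finset.sum_const_zero, add_zero, zero_add]
  exact count_lemma g a b ha hb

lemma q_alph (g i : ℕ) (h1 : 1 ≤ i) (h2 : i ≤ g) : qform g (alph g i) = 1 := by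
  simp only [qform, alph, mul_zero, mul_one, Finset.sum_const_zero, add_zero, zero_add]
  rw [Fin.sum_univ_eq_sum_range (fun j => if j + 1 = i then (1 : ZMod 2) else 0) g]
  rw [Finset.sum_eq_single (i - 1)]
  · rw [if_pos (by omega)]
  · intro b _ hb
    rw [if_neg (by omega)]
  · intro h
    exact absurd (Finset.mem_range.mpr (by omega)) h

lemma q_bet (g i : ℕ) (h1 : 1 ≤ i) (h2 : i ≤ g) :
    qform g (bet g i) = if i ≤ (g - 1) / 2 then 1 else 0 := by
  simp only [qform, bet, mul_zero, zero_mul, mul_ite, mul_one,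
    Finset.sum_const_zero, add_zero, zero_add]
  simp only [ite_self, Finset.sum_const_zero, zero_add]
  rw [Fin.sum_univ_eq_sum_range
    (fun j => if j + 1 = i then (if j + 1 ≤ (g - 1) / 2 then (1 : ZMod 2) else 0) else 0) g]
  rw [Finset.sum_eq_single (i - 1)]
  · rw [if_pos (by omega), show i - 1 + 1 = i from by omega]
  · intro b _ hb
    rw [if_neg (by omega)]
  · intro h
    exact absurd (Finset.mem_range.mpr (by omega)) h

lemma q_dlt (g j : ℕ) (h1 : 1 ≤ j) (h2 : j ≤ 8) : qform g (dlt g j) = 1 := by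
  interval_cases j <;>
    simp [qform, dlt, dlt', Fin.sum_univ_seven] <;> decide

@[simp] lemma dlt_inl (g j : ℕ) (i : Fin g) : dlt g j (Sum.inl i) = 0 := by
  unfold dlt dlt'
  split <;> simp

@[simp] lemma dlt_inrl (g j : ℕ) (i : Fin g) : dlt g j (Sum.inr (Sum.inl i)) = 0 := by
  unfold dlt dlt'
  split <;> simp

lemma Bform_dlt_right (g : ℕ) (x : MCKVec g) (j : ℕ) : Bform g x (dlt g j) = 0 := by
  simp [Bform]

lemma q_add_dlt (g : ℕ) (x : MCKVec g) (j : ℕ) (h1 : 1 ≤ j) (h2 : j ≤ 8) :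
    qform g (x + dlt g j) = qform g x + 1 := by
  rw [qform_add, Bform_dlt_right, q_dlt g j h1 h2, add_zero]

lemma Bform_bet_right (g : ℕ) (x : MCKVec g) (i : ℕ) (h1 : 1 ≤ i) (h2 : i ≤ g) :
    Bform g x (bet g i) = x (Sum.inl ⟨i - 1, by omega⟩) := by
  simp only [Bform, bet, mul_zero, mul_one, mul_ite, add_zero]
  rw [Finset.sum_eq_single (⟨i - 1, by omega⟩ : Fin g)]
  · rw [if_pos (show i - 1 + 1 = i from by omega)]
  · intro b _ hb
    rw [if_neg]
    intro h
    exact hb (Fin.ext (show (b : ℕ) = i - 1 from by omega))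
  · intro h; exact absurd (Finset.mem_univ _) h

lemma Bform_sum_alph_bet (g a b i : ℕ) (h1 : 1 ≤ i) (h2 : i ≤ g) :
    Bform g (∑ m ∈ Finset.Icc a b, alph g m) (bet g i)
      = if i ∈ Finset.Icc a b then 1 else 0 := by
  rw [Bform_bet_right g _ i h1 h2, sum_alph_inl, show (i - 1) + 1 = i from by omega]

lemma Bform_bet_bet (g i i' : ℕ) : Bform g (bet g i) (bet g i') = 0 := by
  simp [Bform, bet]


/-- There is a quadratic form `q` with respect to the mod-2 intersection
pairing taking the value `1` on all the vanishing cycles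
(`B_{k,·}`, their partners `B_{k,·} + δ_3 + δ_4`, and
`a_1, a_2, a_3, a_4, b_1, b_2, b_3, b_4`), and with `q(δ_j) = 1` for all
`j ∈ {1, …, 8}`. -/
theorem typeIBsharp_odd_genus_spin (g : ℕ) (hg : 3 ≤ g) (hgodd : Odd g) :
    ∃ q : MCKVec g → ZMod 2,
      (∀ x y : MCKVec g, q (x + y) = q x + q y + Bform g x y) ∧
      (∀ k ≤ g, q (BIBsharp g k) = 1) ∧
      (∀ k ≤ g, q (BIBsharp g k + dlt g 3 + dlt g 4) = 1) ∧
      q (bet g ((g + 1) / 2) + dlt g 5) = 1 ∧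
      q (bet g ((g + 1) / 2) + dlt g 7) = 1 ∧
      q (bet g ((g + 1) / 2) + dlt g 3) = 1 ∧
      q (bet g ((g + 1) / 2) + dlt g 3 + dlt g 5 + dlt g 7) = 1 ∧
      q (bet g ((g + 1) / 2) + dlt g 6) = 1 ∧
      q (bet g ((g + 1) / 2) + dlt g 8) = 1 ∧
      q (bet g ((g + 1) / 2) + dlt g 4) = 1 ∧
      q (bet g ((g + 1) / 2) + dlt g 4 + dlt g 6 + dlt g 8) = 1 ∧
      (∀ j, 1 ≤ j → j ≤ 8 → q (dlt g j) = 1) := by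
  have hgm : g % 2 = 1 := Nat.odd_iff.mp hgodd
  have qbm : qform g (bet g ((g + 1) / 2)) = 0 := by
    rw [q_bet g _ (by omega) (by omega), if_neg (by omega)]
  have main : ∀ k ≤ g, qform g (BIBsharp g k) = 1 := by
    intro k hk
    unfold BIBsharp
    by_cases h0 : k = 0
    · rw [if_pos h0]
      rw [q_add_dlt g _ 8 (by norm_num) (by norm_num),
          q_add_dlt g _ 5 (by norm_num) (by norm_num),
          q_add_dlt g _ 4 (by norm_num) (by norm_num),
          q_add_dlt g _ 2 (by norm_num) (by norm_num),
          q_sum_alph g 1 g le_rfl le_rfl,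
          show g + 1 - 1 = g from by omega, odd_cast g hgm]
      decide
    rw [if_neg h0]
    by_cases h1 : k = 1
    · rw [if_pos h1]
      rw [q_add_dlt g _ 8 (by norm_num) (by norm_num),
          q_add_dlt g _ 5 (by norm_num) (by norm_num),
          q_add_dlt g _ 4 (by norm_num) (by norm_num),
          qform_add g _ (bet g g), Bform_add_left,
          qform_add g _ (bet g 1),
          q_sum_alph g 1 g le_rfl le_rfl,
          q_bet g 1 (by omega) (by omega), q_bet g g (by omega) (by omega),
          Bform_sum_alph_bet g 1 g 1 (by omega) (by omega),
          Bform_sum_alph_bet g 1 g g (by omega) (by omega),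
          Bform_bet_bet,
          if_pos (show (1:ℕ) ≤ (g - 1) / 2 from by omega),
          if_neg (show ¬ g ≤ (g - 1) / 2 from by omega),
          if_pos (show (1:ℕ) ∈ Finset.Icc 1 g from by simp only [Finset.mem_Icc]; omega),
          if_pos (show g ∈ Finset.Icc 1 g from by simp only [Finset.mem_Icc]; omega),
          show g + 1 - 1 = g from by omega, odd_cast g hgm]
      decide
    rw [if_neg h1]
    by_cases hgk : k = g
    · rw [if_pos hgk]
      rw [q_add_dlt g _ 6 (by norm_num) (by norm_num),
          q_add_dlt g _ 5 (by norm_num) (by norm_num),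
          q_alph g _ (by omega) (by omega)]
      decide
    rw [if_neg hgk]
    by_cases he : k % 2 = 0
    · rw [if_pos he]
      rw [q_add_dlt g _ 8 (by norm_num) (by norm_num),
          q_add_dlt g _ 5 (by norm_num) (by norm_num),
          q_add_dlt g _ 4 (by norm_num) (by norm_num),
          qform_add g _ (bet g (g + 1 - k / 2)), Bform_add_left,
          qform_add g _ (bet g (k / 2)),
          q_sum_alph g (k / 2 + 1) (g - k / 2) (by omega) (by omega),
          q_bet g (k / 2) (by omega) (by omega),
          q_bet g (g + 1 - k / 2) (by omega) (by omega),
          Bform_sum_alph_bet g _ _ (k / 2) (by omega) (by omega),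
          Bform_sum_alph_bet g _ _ (g + 1 - k / 2) (by omega) (by omega),
          Bform_bet_bet,
          if_pos (show k / 2 ≤ (g - 1) / 2 from by omega),
          if_neg (show ¬ (g + 1 - k / 2 ≤ (g - 1) / 2) from by omega),
          if_neg (show k / 2 ∉ Finset.Icc (k / 2 + 1) (g - k / 2) from by
            simp only [Finset.mem_Icc]; omega),
          if_neg (show g + 1 - k / 2 ∉ Finset.Icc (k / 2 + 1) (g - k / 2) from by
            simp only [Finset.mem_Icc]; omega),
          odd_cast _ (by omega)]
      decide
    · rw [if_neg he]
      rw [q_add_dlt g _ 8 (by norm_num) (by norm_num),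
          q_add_dlt g _ 5 (by norm_num) (by norm_num),
          q_add_dlt g _ 4 (by norm_num) (by norm_num),
          qform_add g _ (bet g (g - (k - 1) / 2)), Bform_add_left,
          qform_add g _ (bet g ((k - 1) / 2 + 1)),
          q_sum_alph g ((k - 1) / 2 + 1) (g - (k - 1) / 2) (by omega) (by omega),
          q_bet g ((k - 1) / 2 + 1) (by omega) (by omega),
          q_bet g (g - (k - 1) / 2) (by omega) (by omega),
          Bform_sum_alph_bet g _ _ ((k - 1) / 2 + 1) (by omega) (by omega),
          Bform_sum_alph_bet g _ _ (g - (k - 1) / 2) (by omega) (by omega),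
          Bform_bet_bet,
          if_pos (show (k - 1) / 2 + 1 ≤ (g - 1) / 2 from by omega),
          if_neg (show ¬ (g - (k - 1) / 2 ≤ (g - 1) / 2) from by omega),
          if_pos (show (k - 1) / 2 + 1 ∈ Finset.Icc ((k - 1) / 2 + 1) (g - (k - 1) / 2) from by
            simp only [Finset.mem_Icc]; omega),
          if_pos (show g - (k - 1) / 2 ∈ Finset.Icc ((k - 1) / 2 + 1) (g - (k - 1) / 2) from by
            simp only [Finset.mem_Icc]; omega),
          odd_cast _ (by omega)]
      decide
  refine ⟨qform g, qform_add g, main, ?_, ?_, ?_, ?_, ?_, ?_, ?_, ?_, ?_, ?_⟩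
  · intro k hk
    rw [q_add_dlt g _ 4 (by norm_num) (by norm_num),
        q_add_dlt g _ 3 (by norm_num) (by norm_num), main k hk]
    decide
  · rw [q_add_dlt g _ 5 (by norm_num) (by norm_num), qbm]; decide
  · rw [q_add_dlt g _ 7 (by norm_num) (by norm_num), qbm]; decide
  · rw [q_add_dlt g _ 3 (by norm_num) (by norm_num), qbm]; decide
  · rw [q_add_dlt g _ 7 (by norm_num) (by norm_num),
        q_add_dlt g _ 5 (by norm_num) (by norm_num),
        q_add_dlt g _ 3 (by norm_num) (by norm_num), qbm]; decide
  · rw [q_add_dlt g _ 6 (by norm_num) (by norm_num), qbm]; decide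
  · rw [q_add_dlt g _ 8 (by norm_num) (by norm_num), qbm]; decide
  · rw [q_add_dlt g _ 4 (by norm_num) (by norm_num), qbm]; decide
  · rw [q_add_dlt g _ 8 (by norm_num) (by norm_num),
        q_add_dlt g _ 6 (by norm_num) (by norm_num),
        q_add_dlt g _ 4 (by norm_num) (by norm_num), qbm]; decide
  · intro j hj1 hj2; exact q_dlt g j hj1 hj2
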